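/- For every m ≥ 1 there is an unweighted directed graph D of order 2m+1, namely the graph on vertices {a₁,…,a_m, b₁,…,b_{m+1}} with an edge from b_i to a_j whenever i ≥ j and an edge from a_i to b_{i+1} for each 1 ≤ i ≤ m, such that b₁ is the only vertex with directed paths to all other vertices, and ept_rzf(D, b₁) = m + Σ_{i=1}^m (m+2−i) = m(m+5)/2. In particular there exist directed graphs of order n whose minimum expected propagation time from a single vertex is Ω(n²). -/

import Mathlib

open scoped ENNReal NNReal

namespace RZF

variable {V : Type*} [Fintype V] [DecidableEq V]

/-- Probability that the white vertex `x` turns blue in one round of weighted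
randomized zero forcing with weights `w`, given the current blue set `B`
(`0` when the total incoming weight of `x` is `0`). -/
noncomputable def turnProb (w : V → V → ℝ≥0) (B : Finset V) (x : V) : ℝ≥0 :=
  (∑ u ∈ B, w u x) / ∑ u, w u x

/-- One-round transition probability of the RZF Markov chain from blue set `B`
to blue set `C`: each white vertex independently turns blue with probability
`turnProb w B ·`, and blue vertices stay blue. -/
noncomputable def stepProb (w : V → V → ℝ≥0) (B C : Finset V) : ℝ≥0∞ :=
  if B ⊆ C then
    (∏ x ∈ C \ B, (turnProb w B x : ℝ≥0∞)) *
      ∏ x ∈ Cᶜ, (1 - (turnProb w B x : ℝ≥0∞))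
  else 0

/-- Distribution of the blue set after `t` rounds, started from `S`. -/
noncomputable def state (w : V → V → ℝ≥0) (S : Finset V) : ℕ → Finset V → ℝ≥0∞
  | 0 => fun C => if C = S then 1 else 0
  | t + 1 => fun C => ∑ B : Finset V, state w S t B * stepProb w B C

/-- Expected propagation time `∑ₜ P(Bₜ ≠ V(G))`; this equals `E[τ]` when the
all-blue state is reachable from `S`, and `∞` otherwise. -/
noncomputable def ept (w : V → V → ℝ≥0) (S : Finset V) : ℝ≥0∞ :=
  ∑' t : ℕ, ∑ C ∈ Finset.univ.filter (fun C : Finset V => C ≠ Finset.univ),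
    state w S t C

/-- Minimum expected propagation time over singleton starting sets. -/
noncomputable def eptMin (w : V → V → ℝ≥0) : ℝ≥0∞ :=
  ⨅ v : V, ept w {v}

/-- The weight function of an unweighted directed graph: weight `1` on each
edge and `0` otherwise, so that `turnProb` is the fraction of in-neighbors
that are blue. -/
def unweight (adj : V → V → Prop) [DecidableRel adj] : V → V → ℝ≥0 :=
  fun u v => if adj u v then 1 else 0

end RZF

/-- `reachIn adj t a b` : there is a directed path of length at most `t`
from `a` to `b` in the directed graph with adjacency relation `adj`. -/
def reachIn {V : Type*} (adj : V → V → Prop) : ℕ → V → V → Prop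
  | 0, a, b => a = b
  | t + 1, a, b => reachIn adj t a b ∨ ∃ c, reachIn adj t a c ∧ adj c b

/-- The unweighted directed graph `D` of order `2m + 1` on vertices
`a₁, …, a_m` (`Sum.inl`) and `b₁, …, b_{m+1}` (`Sum.inr`), with an edge from
`bᵢ` to `aⱼ` whenever `i ≥ j` and an edge from `aᵢ` to `bᵢ₊₁` for each `i`
(each edge has weight `1`). -/
noncomputable def dWeight (m : ℕ) :
    (Fin m ⊕ Fin (m + 1)) → (Fin m ⊕ Fin (m + 1)) → ℝ≥0
  | Sum.inr i, Sum.inl j => if (j : ℕ) ≤ (i : ℕ) then 1 else 0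
  | Sum.inl i, Sum.inr j => if (j : ℕ) = (i : ℕ) + 1 then 1 else 0
  | _, _ => 0

/-!
Rank the vertices `b₁, a₁, b₂, a₂, …, a_m, b_{m+1}` by `0, 1, …, 2m`. No edge raises the rank
by more than one, so from the blue set `{rank ≤ k}` only the vertex of rank `k + 1` can turn
blue: the process climbs the chain of sublevel sets of the rank, like a pure birth chain, and
its expected propagation time is the sum of the mean waiting times `1 / pₖ` of the stages. The
vertex `aⱼ` sees exactly one blue in-neighbour, `bⱼ`, among its `m + 2 - j` in-neighbours, so it
waits `m + 2 - j` rounds on average, and `bⱼ₊₁`, whose only in-neighbour is `aⱼ`, turns blue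
in one round.
-/
open Finset Function Relation

theorem ENNReal.tsum_mul_tsum_eq_tsum_sum_antidiagonal (f g : ℕ → ℝ≥0∞) :
    (∑' n, f n) * ∑' n, g n = ∑' n, ∑ kl ∈ antidiagonal n, f kl.1 * g kl.2 := by
  simp_rw [← ENNReal.tsum_mul_right, ← ENNReal.tsum_mul_left, ← Finset.tsum_subtype]
  rw [← ENNReal.tsum_prod, ← HasAntidiagonal.sigmaAntidiagonalEquivProd.tsum_eq,
    ENNReal.tsum_sigma']
  rfl

theorem Relation.reflTransGen_of_rank {α : Type*} {r : α → α → Prop} (f : α → ℕ) {s : α}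
    (h0 : ∀ x, f x = 0 → x = s) (hsucc : ∀ x n, f x = n + 1 → ∃ y, f y = n ∧ r y x) (x : α) :
    ReflTransGen r s x := by
  suffices ∀ n x, f x = n → ReflTransGen r s x from this _ x rfl
  intro n
  induction n with
  | zero => intro x hx; rw [h0 x hx]
  | succ n ih =>
    intro x hx
    obtain ⟨y, hy, hyx⟩ := hsucc x n hx
    exact (ih y hy).tail hyx

theorem Finset.sum_range_two_mul {M : Type*} [AddCommMonoid M] (f : ℕ → M) (m : ℕ) :
    ∑ k ∈ range (2 * m), f k = ∑ j ∈ range m, (f (2 * j) + f (2 * j + 1)) := by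
  induction m with
  | zero => simp
  | succ m ih => rw [Nat.mul_succ, sum_range_succ, sum_range_succ, sum_range_succ, ih, add_assoc]

namespace RZF

variable {V : Type*} [Fintype V]

theorem turnProb_le_one (w : V → V → ℝ≥0) (B : Finset V) (x : V) : turnProb w B x ≤ 1 :=
  div_le_one_of_le₀ (sum_le_sum_of_subset (subset_univ B)) zero_le

theorem turnProb_eq_zero_of_forall_mem (w : V → V → ℝ≥0) {B : Finset V} {x : V}
    (h : ∀ u ∈ B, w u x = 0) : turnProb w B x = 0 := by
  simp [turnProb, sum_eq_zero h]

def sublevel (f : V → ℕ) (k : ℕ) : Finset V := univ.filter (f · ≤ k)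

theorem mem_sublevel {f : V → ℕ} {k : ℕ} {v : V} : v ∈ sublevel f k ↔ f v ≤ k := by
  simp [sublevel]

theorem sublevel_eq_univ {f : V → ℕ} {n : ℕ} (hn : ∀ v, f v ≤ n) : sublevel f n = univ :=
  eq_univ_of_forall fun v => mem_sublevel.mpr (hn v)

variable [DecidableEq V]

theorem stepProb_univ (w : V → V → ℝ≥0) (C : Finset V) :
    stepProb w univ C = if C = univ then 1 else 0 := by
  by_cases h : C = univ
  · simp [stepProb, h]
  · simp [stepProb, h, univ_subset_iff]

theorem stepProb_of_unique_pivot (w : V → V → ℝ≥0) {B : Finset V} {x : V} (hx : x ∉ B)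
    (h0 : ∀ y ∉ B, y ≠ x → turnProb w B y = 0) (C : Finset V) :
    stepProb w B C = (if C = B then 1 - (turnProb w B x : ℝ≥0∞) else 0) +
      (if C = insert x B then (turnProb w B x : ℝ≥0∞) else 0) := by
  have hBx : B ≠ insert x B := fun h => hx (h ▸ mem_insert_self x B)
  unfold stepProb
  by_cases hBC : B ⊆ C
  swap
  · have h1 : C ≠ B := by rintro rfl; exact hBC subset_rfl
    have h2 : C ≠ insert x B := by rintro rfl; exact hBC (subset_insert x B)
    simp [hBC, h1, h2]
  rw [if_pos hBC]
  by_cases hnew : ∀ y ∈ C \ B, y = x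
  · rcases subset_singleton_iff.mp (fun y hy => mem_singleton.mpr (hnew y hy)) with h | h
    · obtain rfl : C = B := (sdiff_eq_empty_iff_subset.mp h).antisymm hBC
      rw [sdiff_self, bot_eq_empty, prod_empty, one_mul,
        prod_eq_single_of_mem x (mem_compl.mpr hx)]
      · simp [hBx]
      · intro y hy hyx
        simp [h0 y (mem_compl.mp hy) hyx]
    · obtain rfl : C = insert x B := by
        rw [← union_sdiff_of_subset hBC, h, union_comm, ← insert_eq]
      rw [h, prod_singleton, prod_eq_one, mul_one]
      · simp [hBx.symm]
      · intro y hy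
        simp only [mem_compl, mem_insert, not_or] at hy
        simp [h0 y hy.2 hy.1]
  · push Not at hnew
    obtain ⟨y, hy, hyx⟩ := hnew
    obtain ⟨hyC, hyB⟩ := mem_sdiff.mp hy
    have h1 : C ≠ B := by rintro rfl; exact hyB hyC
    have h2 : C ≠ insert x B := by rintro rfl; simp [hyx, hyB] at hyC
    rw [prod_eq_zero hy (by simp [h0 y hyB hyx])]
    simp [h1, h2]

theorem insert_sublevel {f : V → ℕ} (hf : Injective f) {k : ℕ} {x : V} (hx : f x = k + 1) :
    insert x (sublevel f k) = sublevel f (k + 1) := by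
  ext y
  rw [mem_insert, mem_sublevel, mem_sublevel]
  constructor
  · rintro (rfl | hy) <;> omega
  · intro hy
    rcases hy.lt_or_eq with hy | hy
    · exact Or.inr (by omega)
    · exact Or.inl (hf (hy.trans hx.symm))

theorem stepProb_sublevel (w : V → V → ℝ≥0) {f : V → ℕ} (hf : Injective f)
    (hw : ∀ u v, w u v ≠ 0 → f v ≤ f u + 1) {k : ℕ} {x : V} (hx : f x = k + 1) (C : Finset V) :
    stepProb w (sublevel f k) C =
      (if C = sublevel f k then 1 - (turnProb w (sublevel f k) x : ℝ≥0∞) else 0) +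
      (if C = sublevel f (k + 1) then (turnProb w (sublevel f k) x : ℝ≥0∞) else 0) := by
  rw [← insert_sublevel hf hx]
  refine stepProb_of_unique_pivot w (by simp [mem_sublevel, hx]) (fun y hy hyx => ?_) C
  have hyk : k + 1 < f y := by
    rw [mem_sublevel] at hy
    exact lt_of_le_of_ne (by omega) fun h => hyx (hf (hx.trans h).symm)
  refine turnProb_eq_zero_of_forall_mem w fun u hu => ?_
  by_contra h
  have := hw u y h
  have := mem_sublevel.mp hu
  omega

/-- Law at time `t` of the level of the pure birth chain on `ℕ` that starts at `0` and climbs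
from level `k` with probability `q k`. -/
noncomputable def birthChain (q : ℕ → ℝ≥0) : ℕ → ℕ → ℝ≥0∞
  | 0, k => if k = 0 then 1 else 0
  | t + 1, 0 => birthChain q t 0 * (1 - q 0)
  | t + 1, k + 1 => birthChain q t (k + 1) * (1 - q (k + 1)) + birthChain q t k * q k

theorem birthChain_zero_eq_pow (q : ℕ → ℝ≥0) (t : ℕ) :
    birthChain q t 0 = (1 - q 0) ^ t := by
  induction t with
  | zero => simp [birthChain]
  | succ t ih => rw [birthChain, ih, pow_succ]

theorem birthChain_succ_succ_eq_sum (q : ℕ → ℝ≥0) (t k : ℕ) :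
    birthChain q (t + 1) (k + 1) =
      ∑ su ∈ antidiagonal t, birthChain q su.1 k * q k * (1 - q (k + 1)) ^ su.2 := by
  induction t with
  | zero => simp [birthChain]
  | succ t ih =>
    rw [birthChain, ih, sum_mul, Nat.sum_antidiagonal_succ', pow_zero, mul_one, add_comm]
    simp_rw [pow_succ, mul_assoc]

theorem tsum_birthChain (q : ℕ → ℝ≥0) (k : ℕ) (hq0 : ∀ j < k, q j ≠ 0)
    (hq1 : ∀ j ≤ k, q j ≤ 1) : ∑' t, birthChain q t k = (q k : ℝ≥0∞)⁻¹ := by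
  have hgeom : ∀ j, q j ≤ 1 → ∑' t, (1 - (q j : ℝ≥0∞)) ^ t = (q j : ℝ≥0∞)⁻¹ := by
    intro j hj
    rw [ENNReal.tsum_geometric,
      ENNReal.sub_sub_cancel ENNReal.one_ne_top (ENNReal.coe_le_one_iff.mpr hj)]
  induction k with
  | zero => simp_rw [birthChain_zero_eq_pow]; exact hgeom 0 (hq1 0 le_rfl)
  | succ k ih =>
    have hqk : (q k : ℝ≥0∞) ≠ 0 := ENNReal.coe_ne_zero.mpr (hq0 k k.lt_succ_self)
    rw [tsum_eq_zero_add' ENNReal.summable]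
    simp_rw [birthChain_succ_succ_eq_sum]
    rw [← ENNReal.tsum_mul_tsum_eq_tsum_sum_antidiagonal (fun s => birthChain q s k * q k),
      ENNReal.tsum_mul_right, ih (fun j hj => hq0 j (by omega)) fun j hj => hq1 j (by omega),
      ENNReal.inv_mul_cancel hqk ENNReal.coe_ne_top, one_mul, hgeom _ (hq1 _ le_rfl)]
    simp [birthChain]

theorem state_eq_sum_birthChain (w : V → V → ℝ≥0) (D : ℕ → Finset V) (q : ℕ → ℝ≥0) (n : ℕ)
    (hqn : q n = 0)
    (hstep : ∀ k ≤ n, ∀ C, stepProb w (D k) C =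
      (if C = D k then 1 - (q k : ℝ≥0∞) else 0) + (if C = D (k + 1) then (q k : ℝ≥0∞) else 0))
    (t : ℕ) (C : Finset V) :
    state w (D 0) t C = ∑ k ∈ range (n + 1), if C = D k then birthChain q t k else 0 := by
  induction t generalizing C with
  | zero =>
    rw [sum_eq_single_of_mem 0 (mem_range.mpr n.succ_pos)
      fun k _ hk => by simp [birthChain, hk]]
    simp [state, birthChain]
  | succ t ih =>
    have hexp : state w (D 0) (t + 1) C =
        ∑ k ∈ range (n + 1), birthChain q t k * stepProb w (D k) C := by
      simp only [state, ih, sum_mul, ite_mul, zero_mul]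
      rw [sum_comm]
      simp
    rw [hexp, sum_congr rfl fun k hk => by rw [hstep k (mem_range_succ_iff.mp hk)]]
    simp only [mul_add, mul_ite, mul_zero, sum_add_distrib]
    rw [sum_range_succ (fun k => if C = D (k + 1) then _ else 0), hqn,
      sum_range_succ' (fun k => if C = D k then birthChain q t k * _ else 0),
      sum_range_succ' (fun k => if C = D k then birthChain q (t + 1) k else 0)]
    simp only [birthChain, ite_add_zero, sum_add_distrib, ENNReal.coe_zero, mul_zero, ite_self]
    ring

theorem ept_sublevel_eq_sum (w : V → V → ℝ≥0) {f : V → ℕ} (hf : Injective f)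
    (hw : ∀ u v, w u v ≠ 0 → f v ≤ f u + 1) {n : ℕ} (hn : ∀ v, f v ≤ n) (p : ℕ → ℝ≥0)
    (hp : ∀ k < n, p k ≠ 0)
    (hpivot : ∀ k < n, ∃ x, f x = k + 1 ∧ turnProb w (sublevel f k) x = p k) :
    ept w (sublevel f 0) = ∑ k ∈ range n, (p k : ℝ≥0∞)⁻¹ := by
  -- level `n`, the all-blue set, is absorbing
  set q : ℕ → ℝ≥0 := fun k => if k < n then p k else 0
  have hstep : ∀ k ≤ n, ∀ C, stepProb w (sublevel f k) C =
      (if C = sublevel f k then 1 - (q k : ℝ≥0∞) else 0) +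
      (if C = sublevel f (k + 1) then (q k : ℝ≥0∞) else 0) := by
    intro k hk C
    rcases hk.lt_or_eq with hk | rfl
    · obtain ⟨x, hx, hxp⟩ := hpivot k hk
      rw [stepProb_sublevel w hf hw hx, hxp]
      simp [q, hk]
    · rw [sublevel_eq_univ hn, stepProb_univ]
      simp [q]
  have hp1 : ∀ k < n, p k ≤ 1 := fun k hk => by
    obtain ⟨x, -, hxp⟩ := hpivot k hk
    exact hxp ▸ turnProb_le_one w _ x
  have hne : ∀ k < n, sublevel f k ≠ univ := fun k hk h => by
    obtain ⟨x, hx, -⟩ := hpivot k hk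
    have := mem_sublevel.mp (h ▸ mem_univ x)
    omega
  have hround : ∀ t, ∑ C ∈ univ.filter (· ≠ univ), state w (sublevel f 0) t C =
      ∑ k ∈ range n, birthChain q t k := by
    intro t
    simp_rw [state_eq_sum_birthChain w (sublevel f) q n (by simp [q]) hstep t]
    rw [sum_comm]
    simp only [sum_ite_eq', mem_filter, mem_univ, true_and]
    rw [sum_range_succ, sublevel_eq_univ hn]
    simp only [ne_eq, not_true_eq_false, if_false, add_zero]
    exact sum_congr rfl fun k hk => if_pos (hne k (mem_range.mp hk))
  unfold ept
  rw [tsum_congr hround, Summable.tsum_finsetSum fun _ _ => ENNReal.summable]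
  refine sum_congr rfl fun k hk => ?_
  have hk := mem_range.mp hk
  rw [tsum_birthChain q k (fun j hj => by simpa [q, hj.trans hk] using hp j (hj.trans hk))
    (fun j hj => by simpa [q, hj.trans_lt hk] using hp1 j (hj.trans_lt hk))]
  simp [q, hk]

end RZF

open RZF

def dRank (m : ℕ) : Fin m ⊕ Fin (m + 1) → ℕ
  | Sum.inl j => 2 * j + 1
  | Sum.inr i => 2 * i

theorem dRank_injective (m : ℕ) : Injective (dRank m) := by
  rintro (a | b) (a' | b') h <;> simp [dRank, Fin.ext_iff] at h ⊢ <;> omega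

theorem dRank_le (m : ℕ) (v : Fin m ⊕ Fin (m + 1)) : dRank m v ≤ 2 * m := by
  rcases v with a | b <;> simp only [dRank] <;> omega

theorem dRank_le_of_dWeight_ne_zero {m : ℕ} {u v : Fin m ⊕ Fin (m + 1)} (h : dWeight m u v ≠ 0) :
    dRank m v ≤ dRank m u + 1 := by
  rcases u with a | b <;> rcases v with a' | b' <;> simp [dWeight] at h <;> simp only [dRank] <;> omega

theorem sublevel_dRank_zero (m : ℕ) :
    sublevel (dRank m) 0 = {Sum.inr (⟨0, m.succ_pos⟩ : Fin (m + 1))} := by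
  ext v
  rcases v with a | b
  · simp [mem_sublevel, dRank]
  · rw [mem_sublevel, mem_singleton, Sum.inr.injEq, Fin.ext_iff]
    simp [dRank]

theorem sum_dWeight_inl (m : ℕ) (j : Fin m) :
    ∑ u, dWeight m u (Sum.inl j) = ((m + 1 - j : ℕ) : ℝ≥0) := by
  have : (univ.filter fun i : Fin (m + 1) => (j : ℕ) ≤ i) = Ici j.castSucc := by
    ext i; simp [Fin.le_def]
  simp [Fintype.sum_sum_type, dWeight, sum_boole, this]

theorem turnProb_dWeight_inl (m : ℕ) (j : Fin m) :
    turnProb (dWeight m) (sublevel (dRank m) (2 * j)) (Sum.inl j) = ((m + 1 - j : ℕ) : ℝ≥0)⁻¹ := by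
  rw [turnProb, sum_dWeight_inl, sum_eq_single_of_mem (Sum.inr j.castSucc)]
  · simp [dWeight]
  · simp [mem_sublevel, dRank]
  · rintro (a | b) hb hne
    · simp [dWeight]
    · simp only [mem_sublevel, dRank] at hb
      have : (b : ℕ) ≠ j := fun h => hne (by simp [Fin.ext_iff, h])
      simp only [dWeight]
      exact if_neg (by omega)

theorem turnProb_dWeight_inr (m : ℕ) (j : Fin m) :
    turnProb (dWeight m) (sublevel (dRank m) (2 * j + 1)) (Sum.inr j.succ) = 1 := by
  have hsingle : ∀ u ≠ Sum.inl j, dWeight m u (Sum.inr j.succ) = 0 := by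
    rintro (a | b) hne
    · have : (a : ℕ) ≠ j := fun h => hne (by simp [Fin.ext_iff, h])
      simp only [dWeight, Fin.val_succ]
      exact if_neg (by omega)
    · simp [dWeight]
  rw [turnProb, Fintype.sum_eq_single _ hsingle,
    sum_eq_single_of_mem _ (by simp [mem_sublevel, dRank]) fun u _ => hsingle u]
  simp [dWeight]

-- With `0`-based indices, stage `2 * j` waits for `aⱼ` and stage `2 * j + 1` for `bⱼ₊₁`.
def dWait (m k : ℕ) : ℕ := if Even k then m + 1 - k / 2 else 1

theorem exists_dRank_eq_succ_turnProb {m k : ℕ} (hk : k < 2 * m) :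
    ∃ x, dRank m x = k + 1 ∧
      turnProb (dWeight m) (sublevel (dRank m) k) x = (dWait m k : ℝ≥0)⁻¹ := by
  obtain ⟨j, rfl | rfl⟩ := Nat.even_or_odd' k
  · refine ⟨Sum.inl ⟨j, by omega⟩, rfl, ?_⟩
    simpa [dWait] using turnProb_dWeight_inl m ⟨j, by omega⟩
  · refine ⟨Sum.inr (Fin.succ ⟨j, by omega⟩), by simp only [dRank, Fin.val_succ]; ring, ?_⟩
    rw [turnProb_dWeight_inr m ⟨j, by omega⟩]
    simp [dWait]

theorem ept_dWeight (m : ℕ) :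
    ept (dWeight m) {Sum.inr (⟨0, m.succ_pos⟩ : Fin (m + 1))} =
      ((∑ k ∈ range (2 * m), dWait m k : ℕ) : ℝ≥0∞) := by
  have hwait : ∀ k < 2 * m, dWait m k ≠ 0 := fun k hk => by unfold dWait; split_ifs <;> omega
  rw [← sublevel_dRank_zero, ept_sublevel_eq_sum (dWeight m) (dRank_injective m)
    (fun u v => dRank_le_of_dWeight_ne_zero) (dRank_le m) (fun k => (dWait m k : ℝ≥0)⁻¹)
    (fun k hk => by simpa using hwait k hk) (fun k hk => exists_dRank_eq_succ_turnProb hk),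
    Nat.cast_sum]
  refine sum_congr rfl fun k hk => ?_
  rw [ENNReal.coe_inv (by simpa using hwait k (mem_range.mp hk)), inv_inv, ENNReal.coe_natCast]

theorem sum_dWait (m : ℕ) : ∑ k ∈ range (2 * m), dWait m k = m + ∑ i ∈ Icc 1 m, (m + 2 - i) := by
  rw [sum_range_two_mul, ← Finset.Ico_add_one_right_eq_Icc, sum_Ico_eq_sum_range]
  simp only [dWait, even_two, Even.mul_right, Nat.not_even_two_mul_add_one, if_true, if_false]
  rw [sum_add_distrib, sum_const, card_range, smul_eq_mul, mul_one, add_comm, Nat.add_sub_cancel]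
  exact congrArg _ (sum_congr rfl fun j _ => by omega)

theorem two_mul_add_sum_Icc (m : ℕ) : 2 * (m + ∑ i ∈ Icc 1 m, (m + 2 - i)) = m * (m + 5) := by
  induction m with
  | zero => simp
  | succ m ih =>
    rw [sum_Icc_succ_top (by omega), Nat.add_sub_cancel_left]
    have : ∑ i ∈ Icc 1 m, (m + 1 + 2 - i) = ∑ i ∈ Icc 1 m, (m + 2 - i) + m := by
      rw [sum_congr rfl fun i hi => show m + 1 + 2 - i = (m + 2 - i) + 1 by
        have := (mem_Icc.mp hi).2; omega]
      rw [sum_add_distrib, sum_const, Nat.card_Icc, smul_eq_mul, mul_one, Nat.add_sub_cancel]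
    rw [this]
    nlinarith [ih]

theorem dWeight_eq_zero_inr_zero (m : ℕ) (u : Fin m ⊕ Fin (m + 1)) :
    dWeight m u (Sum.inr ⟨0, m.succ_pos⟩) = 0 := by
  rcases u with a | b <;> simp [dWeight]

theorem eq_of_dRank_eq_zero {m : ℕ} {x : Fin m ⊕ Fin (m + 1)} (hx : dRank m x = 0) :
    x = Sum.inr ⟨0, m.succ_pos⟩ := by
  rcases x with a | b
  · simp [dRank] at hx
  · simp only [dRank] at hx
    exact congrArg Sum.inr (Fin.ext (by dsimp only; omega))

theorem exists_dWeight_pos_of_dRank_eq_succ {m n : ℕ} {x : Fin m ⊕ Fin (m + 1)}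
    (hx : dRank m x = n + 1) : ∃ y, dRank m y = n ∧ 0 < dWeight m y x := by
  rcases x with a | b
  · refine ⟨Sum.inr a.castSucc, ?_, by simp [dWeight]⟩
    simp only [dRank, Fin.val_castSucc] at hx ⊢
    omega
  · simp only [dRank] at hx
    refine ⟨Sum.inl ⟨b - 1, by omega⟩, by simp only [dRank]; omega, ?_⟩
    simp only [dWeight]
    rw [if_pos (by omega)]
    exact one_pos

theorem reflTransGen_dWeight_iff (m : ℕ) (s : Fin m ⊕ Fin (m + 1)) :
    (∀ x, ReflTransGen (fun a b => 0 < dWeight m a b) s x) ↔ s = Sum.inr ⟨0, m.succ_pos⟩ := by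
  constructor
  · intro h
    rcases (h (Sum.inr ⟨0, m.succ_pos⟩)).cases_tail with hs | ⟨c, -, hc⟩
    · exact hs.symm
    · exact (hc.ne' (dWeight_eq_zero_inr_zero m c)).elim
  · rintro rfl
    exact reflTransGen_of_rank (dRank m) (fun x => eq_of_dRank_eq_zero)
      (fun x n => exists_dWeight_pos_of_dRank_eq_succ)

/-- In the directed graph `D` above, `b₁` is the only vertex
with directed paths to all other vertices, and
`ept_rzf(D, b₁) = m + ∑_{i=1}^m (m + 2 - i) = m(m+5)/2`; in particular there
are directed graphs of order `n` whose minimum expected propagation time from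
a single vertex is `Ω(n²)`. -/
theorem rzf_quadratic_construction (m : ℕ) :
    (∀ s : Fin m ⊕ Fin (m + 1),
      (∀ x, Relation.ReflTransGen (fun a b => 0 < dWeight m a b) s x) ↔
        s = Sum.inr (⟨0, by omega⟩ : Fin (m + 1))) ∧
    m + ∑ i ∈ Finset.Icc 1 m, (m + 2 - i) = m * (m + 5) / 2 ∧
    RZF.ept (dWeight m) {Sum.inr (⟨0, by omega⟩ : Fin (m + 1))} =
      ((m * (m + 5) / 2 : ℕ) : ℝ≥0∞) := by
  have hsum : m + ∑ i ∈ Finset.Icc 1 m, (m + 2 - i) = m * (m + 5) / 2 := by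
    have := two_mul_add_sum_Icc m
    omega
  refine ⟨reflTransGen_dWeight_iff m, hsum, ?_⟩
  rw [ept_dWeight, sum_dWait, hsum]
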